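/- arXiv:2302.09356 — 9 statements merged into one kernel-verified Lean document; each statement's English description precedes it below -/
import Mathlib

section
/- For every integer j with 0 ≤ j ≤ α₄ − 1 one has jα₂ + α₄ < α₁ + jα₂₁ + j. (In particular the monomial X₂^{jα₂}X₃X₄^{α₄−(j+1)} has strictly smaller total degree than X₁^{α₁+jα₂₁}, so it is the leading monomial of f_{1,j} for a local degree ordering.) -/
/-!
The claim is `j * (α₂ - α₂₁ - 1) + α₄ < α₁`, whose left side grows with `j`, so only
`j = α₄ - 1` matters, where it reads `(α₄ - 1) * (α₂ - α₂₁) + 2 ≤ α₁`. Cancelling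
`α₂₁ * α₃ * (α₄ - 1)` in `n₁ < n₂` leaves
`α₃ * (α₄ - 1) * (α₂ - α₂₁) + 1 < α₃ * (α₂₁ + 1) + A * (α₃ - 1)` with `A = α₁ - α₂₁ - 1`,
and since `α₃ ≤ A` one may divide by `α₃` at the cost of exactly the `+ 2`.
-/

theorem Nat.add_one_lt_add_of_mul_add_one_lt {c m n a : ℕ} (hca : c ≤ a)
    (h : c * m + 1 < c * n + a * (c - 1)) : m + 1 < n + a := by
  obtain _ | c := c
  · simp at h
  · rw [add_tsub_cancel_right] at h
    have : (c + 1) * (m + 1) < (c + 1) * (n + a) := by nlinarith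
    exact Nat.lt_of_mul_lt_mul_left this

theorem Nat.mul_add_le_mul_pred_add {j d s : ℕ} (hj : j ≤ d - 1) (hs : 1 ≤ s) :
    j * s + d ≤ (d - 1) * s + 1 + j := by
  obtain _ | d := d
  · simp_all
  · rw [add_tsub_cancel_right] at hj ⊢
    obtain ⟨k, rfl⟩ := Nat.exists_eq_add_of_le hj
    nlinarith

theorem pred_mul_sub_add_two_le_of_n₁_lt_n₂ {α₁ α₂ α₃ α₄ α₂₁ : ℕ}
    (hn12 : α₂ * α₃ * (α₄ - 1) + 1 <
      α₂₁ * α₃ * α₄ + (α₁ - α₂₁ - 1) * (α₃ - 1) + α₃)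
    (h31 : α₃ < α₁ - α₂₁) (h21 : α₂₁ ≤ α₂) :
    (α₄ - 1) * (α₂ - α₂₁) + 2 ≤ α₁ := by
  obtain ⟨A, rfl⟩ : ∃ A, α₁ = α₂₁ + 1 + A := ⟨α₁ - α₂₁ - 1, by omega⟩
  obtain ⟨s, rfl⟩ := Nat.exists_eq_add_of_le h21
  have hA : α₂₁ + 1 + A - α₂₁ - 1 = A := by omega
  have hd : α₄ ≤ (α₄ - 1) + 1 := by omega
  have key : α₃ * ((α₄ - 1) * s) + 1 < α₃ * (α₂₁ + 1) + A * (α₃ - 1) := by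
    rw [hA] at hn12
    nlinarith [Nat.mul_le_mul_left (α₂₁ * α₃) hd]
  have := Nat.add_one_lt_add_of_mul_add_one_lt (by omega) key
  rw [add_tsub_cancel_left]
  omega

theorem leading_monomial_f1j_general (α₁ α₂ α₃ α₄ α₂₁ : ℕ)
    (hn12 : α₂ * α₃ * (α₄ - 1) + 1 <
      α₂₁ * α₃ * α₄ + (α₁ - α₂₁ - 1) * (α₃ - 1) + α₃)
    (h31 : α₃ < α₁ - α₂₁)
    (h221 : α₂₁ + 1 < α₂) :
    ∀ j : ℕ, j ≤ α₄ - 1 → j * α₂ + α₄ < α₁ + j * α₂₁ + j := by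
  intro j hj
  have hbound := pred_mul_sub_add_two_le_of_n₁_lt_n₂ hn12 h31 (by omega)
  have hmono := Nat.mul_add_le_mul_pred_add (s := α₂ - α₂₁) hj (by omega)
  calc j * α₂ + α₄ = j * α₂₁ + (j * (α₂ - α₂₁) + α₄) := by
        rw [← add_assoc, ← mul_add, Nat.add_sub_cancel' (by omega)]
    _ < α₁ + j * α₂₁ + j := by omega

/-- For every `j` with `0 ≤ j ≤ α₄ − 1` one has
`j*α₂ + α₄ < α₁ + j*α₂₁ + j`. -/
theorem leading_monomial_f1j (α₁ α₂ α₃ α₄ α₂₁ : ℕ)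
    (h1 : 2 ≤ α₁) (h2 : 2 ≤ α₂) (h3 : 2 ≤ α₃) (h4 : 2 ≤ α₄)
    (h21 : 1 ≤ α₂₁) (h21' : α₂₁ ≤ α₁ - 2)
    (hn12 : α₂ * α₃ * (α₄ - 1) + 1 <
      α₂₁ * α₃ * α₄ + (α₁ - α₂₁ - 1) * (α₃ - 1) + α₃)
    (h31 : α₃ < α₁ - α₂₁)
    (h221 : α₂₁ + 1 < α₂) :
    ∀ j : ℕ, j ≤ α₄ - 1 → j * α₂ + α₄ < α₁ + j * α₂₁ + j :=
  leading_monomial_f1j_general α₁ α₂ α₃ α₄ α₂₁ hn12 h31 h221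
end

section
/- If n₁ < n₂ and α₁ > α₃ + α₂₁, then (α₂ − α₂₁)(α₄ − 1) + 1 < α₁. -/
/-!
Expanding `n₂ = α₂₁ α₃ (α₄ - 1) + α₁ α₃ - (α₁ - α₂₁) + 1`, the inequality `n₁ < n₂` becomes
`α₃ (α₂ - α₂₁)(α₄ - 1) < α₁ α₃ - (α₁ - α₂₁)`, and `α₁ - α₂₁ ≥ α₃` bounds the right-hand side by
`α₃ (α₁ - 1)`. Cancelling the positive factor `α₃` gives the claim.
-/

theorem sub_mul_sub_add_one_lt_of_komeda_n₁_lt_n₂ {R : Type*} [CommRing R] [LinearOrder R]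
    [IsStrictOrderedRing R] {α₁ α₂ α₃ α₄ α₂₁ : R} (h₃ : 0 < α₃)
    (hn : α₂ * α₃ * (α₄ - 1) + 1 < α₂₁ * α₃ * α₄ + (α₁ - α₂₁ - 1) * (α₃ - 1) + α₃)
    (h₃₁ : α₃ + α₂₁ ≤ α₁) :
    (α₂ - α₂₁) * (α₄ - 1) + 1 < α₁ := by
  have key : α₃ * ((α₂ - α₂₁) * (α₄ - 1)) < α₃ * (α₁ - 1) :=
    calc α₃ * ((α₂ - α₂₁) * (α₄ - 1))
        = α₂ * α₃ * (α₄ - 1) + 1 - (α₂₁ * α₃ * α₄ + (α₁ - α₂₁ - 1) * (α₃ - 1) + α₃)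
          + (α₁ * α₃ - (α₁ - α₂₁)) := by ring
      _ < α₁ * α₃ - (α₁ - α₂₁) := by linarith
      _ ≤ α₃ * (α₁ - 1) := by linarith
  linarith [lt_of_mul_lt_mul_left key h₃.le]

theorem basic_inequality_general (α₁ α₂ α₃ α₄ α₂₁ : ℕ)
    (h3 : 2 ≤ α₃) (h4 : 2 ≤ α₄)
    (hn12 : α₂ * α₃ * (α₄ - 1) + 1 <
      α₂₁ * α₃ * α₄ + (α₁ - α₂₁ - 1) * (α₃ - 1) + α₃)
    (h31 : α₃ + α₂₁ < α₁) :
    ((α₂ : ℤ) - (α₂₁ : ℤ)) * ((α₄ : ℤ) - 1) + 1 < (α₁ : ℤ) := by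
  zify [show 1 ≤ α₄ by omega, show 1 ≤ α₃ by omega, show α₂₁ ≤ α₁ by omega,
    show 1 ≤ α₁ - α₂₁ by omega] at hn12
  exact sub_mul_sub_add_one_lt_of_komeda_n₁_lt_n₂ (by omega) hn12 (by exact_mod_cast h31.le)

/-- If `n₁ < n₂` and `α₁ > α₃ + α₂₁`, then
`(α₂ − α₂₁)(α₄ − 1) + 1 < α₁`. -/
theorem basic_inequality (α₁ α₂ α₃ α₄ α₂₁ : ℕ)
    (h1 : 2 ≤ α₁) (h2 : 2 ≤ α₂) (h3 : 2 ≤ α₃) (h4 : 2 ≤ α₄)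
    (h21 : 1 ≤ α₂₁) (h21' : α₂₁ ≤ α₁ - 2)
    (hn12 : α₂ * α₃ * (α₄ - 1) + 1 <
      α₂₁ * α₃ * α₄ + (α₁ - α₂₁ - 1) * (α₃ - 1) + α₃)
    (h31 : α₃ + α₂₁ < α₁) :
    ((α₂ : ℤ) - (α₂₁ : ℤ)) * ((α₄ : ℤ) - 1) + 1 < (α₁ : ℤ) :=
  basic_inequality_general α₁ α₂ α₃ α₄ α₂₁ h3 h4 hn12 h31
end

section
/- For every integer j with 0 ≤ j ≤ α₄ − 1 there exists a natural number s satisfying ((α₄−1)s+j)α₂ + α₄ − j < sα₁ + ((α₄−1)s+j+1)α₂₁ + α₃ − s; consequently, for each such j there is a smallest natural number s_j satisfying this inequality. -/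
/-- The defining inequality of the parameter `s_j`. -/
def SJIneq (α₁ α₂ α₃ α₄ α₂₁ j s : ℕ) : Prop :=
  ((α₄ - 1) * s + j) * α₂ + (α₄ - j) <
    s * α₁ + ((α₄ - 1) * s + j + 1) * α₂₁ + α₃ - s

/-!
Moving everything to one side, `SJIneq … j s` says that `s` times
`κ = α₁ - 1 - (α₄ - 1)(α₂ - α₂₁)` exceeds a quantity independent of `s`. The conditions
`n₁ < n₂` and `α₃ < α₁ - α₂₁` force `κ ≥ 1`, so every large enough `s` works, e.g.
`s = j α₂ + α₄`; the least one then exists by well-foundedness of `ℕ`.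
-/

theorem mul_sub_add_two_le_of_n₁_lt_n₂ {a b c d e : ℤ} (hc : 0 < c) (hca : c < a - e)
    (hn : b * c * d + 1 < e * c * (d + 1) + (a - e - 1) * (c - 1) + c) :
    d * (b - e) + 2 ≤ a := by
  have hmul : c * (d * (b - e)) < c * (a - 1) := by linear_combination hn + hca
  linarith [lt_of_mul_lt_mul_left hmul hc.le]

theorem sub_one_mul_add_two_le_of_n₁_lt_n₂ {α₁ α₂ α₃ α₄ α₂₁ : ℕ} (h3 : 0 < α₃)
    (hn12 : α₂ * α₃ * (α₄ - 1) + 1 <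
      α₂₁ * α₃ * α₄ + (α₁ - α₂₁ - 1) * (α₃ - 1) + α₃)
    (h31 : α₃ < α₁ - α₂₁) :
    (α₄ - 1) * α₂ + 2 ≤ α₁ + (α₄ - 1) * α₂₁ := by
  set d := α₄ - 1
  -- `α₄ ≤ d + 1` also covers `α₄ = 0`, where `d + 1 ≠ α₄`.
  have hα₄ : α₂₁ * α₃ * α₄ ≤ α₂₁ * α₃ * (d + 1) := Nat.mul_le_mul_left _ (by omega)
  have hn : (α₂ : ℤ) * α₃ * d + 1 <
      α₂₁ * α₃ * (d + 1) + (α₁ - α₂₁ - 1) * (α₃ - 1) + α₃ := by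
    zify [(by omega : α₂₁ ≤ α₁), (by omega : 1 ≤ α₁ - α₂₁), h3] at hn12 hα₄
    linarith
  have key := mul_sub_add_two_le_of_n₁_lt_n₂ (by exact_mod_cast h3) (by omega) hn
  zify
  linarith

theorem sjIneq_mul_add {α₁ α₂ α₃ α₄ α₂₁ : ℕ} (h3 : 0 < α₃)
    (hslope : (α₄ - 1) * α₂ + 2 ≤ α₁ + (α₄ - 1) * α₂₁) (j : ℕ) :
    SJIneq α₁ α₂ α₃ α₄ α₂₁ j (j * α₂ + α₄) := by
  unfold SJIneq
  rw [lt_tsub_iff_right]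
  generalize hs : j * α₂ + α₄ = s
  have hslope_s := Nat.mul_le_mul_right s hslope
  have hj : α₄ - j ≤ α₄ := Nat.sub_le _ _
  nlinarith

theorem sj_exists_general (α₁ α₂ α₃ α₄ α₂₁ : ℕ)
    (h3 : 2 ≤ α₃)
    (hn12 : α₂ * α₃ * (α₄ - 1) + 1 <
      α₂₁ * α₃ * α₄ + (α₁ - α₂₁ - 1) * (α₃ - 1) + α₃)
    (h31 : α₃ < α₁ - α₂₁) :
    ∀ j : ℕ, j ≤ α₄ - 1 →
      (∃ s : ℕ, SJIneq α₁ α₂ α₃ α₄ α₂₁ j s) ∧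
      (∃ s : ℕ, IsLeast {m : ℕ | SJIneq α₁ α₂ α₃ α₄ α₂₁ j m} s) := by
  intro j _
  have hslope := sub_one_mul_add_two_le_of_n₁_lt_n₂ (by omega) hn12 h31
  have hex : ∃ s, SJIneq α₁ α₂ α₃ α₄ α₂₁ j s := ⟨_, sjIneq_mul_add (by omega) hslope j⟩
  classical
  exact ⟨hex, _, Nat.isLeast_find hex⟩

/-- for every `j ≤ α₄ − 1` there exists `s` satisfying the
inequality, and consequently there is a smallest such `s_j`. -/
theorem sj_exists (α₁ α₂ α₃ α₄ α₂₁ : ℕ)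
    (h1 : 2 ≤ α₁) (h2 : 2 ≤ α₂) (h3 : 2 ≤ α₃) (h4 : 2 ≤ α₄)
    (h21 : 1 ≤ α₂₁) (h21' : α₂₁ ≤ α₁ - 2)
    (hn12 : α₂ * α₃ * (α₄ - 1) + 1 <
      α₂₁ * α₃ * α₄ + (α₁ - α₂₁ - 1) * (α₃ - 1) + α₃)
    (h31 : α₃ < α₁ - α₂₁)
    (h221 : α₂₁ + 1 < α₂) :
    ∀ j : ℕ, j ≤ α₄ - 1 →
      (∃ s : ℕ, SJIneq α₁ α₂ α₃ α₄ α₂₁ j s) ∧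
      (∃ s : ℕ, IsLeast {m : ℕ | SJIneq α₁ α₂ α₃ α₄ α₂₁ j m} s) :=
  sj_exists_general α₁ α₂ α₃ α₄ α₂₁ h3 hn12 h31
end

section
/- For every integer j with 0 ≤ j ≤ α₄ − 1 one has the identity (α₁ + jα₂₁)·n₁ = jα₂·n₂ + n₃ + (α₄−1−j)·n₄. (Equivalently, the binomial f_{1,j} = X₁^{α₁+jα₂₁} − X₂^{jα₂}X₃X₄^{α₄−(j+1)} lies in the toric ideal I_S, i.e., in the kernel of the ring homomorphism K[X₁,X₂,X₃,X₄] → K[t] sending Xᵢ ↦ t^{nᵢ}.) -/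
/-! The binomial `f_{1,j}` is `j` copies of the relation `α₂₁ n₁ + n₄ = α₂ n₂` added to the
relation `α₁ n₁ = n₃ + (α₄ - 1) n₄`; both are polynomial identities in the `αᵢ` once the
truncated subtractions in the `nᵢ` are known to be honest. -/

namespace Komeda

def n₁ (α₂ α₃ α₄ : ℕ) : ℕ := α₂ * α₃ * (α₄ - 1) + 1

def n₂ (α₁ α₃ α₄ α₂₁ : ℕ) : ℕ := α₂₁ * α₃ * α₄ + (α₁ - α₂₁ - 1) * (α₃ - 1) + α₃

def n₃ (α₁ α₂ α₄ α₂₁ : ℕ) : ℕ := α₁ * α₄ + (α₁ - α₂₁ - 1) * (α₂ - 1) * (α₄ - 1) + 1 - α₄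

def n₄ (α₁ α₂ α₃ α₂₁ : ℕ) : ℕ := α₁ * α₂ * (α₃ - 1) + α₂₁ * (α₂ - 1) + α₂

variable {α₁ α₂ α₃ α₄ α₂₁ : ℕ}

theorem alpha₂₁_mul_n₁_add_n₄ (h2 : 1 ≤ α₂) (h3 : 1 ≤ α₃) (h4 : 1 ≤ α₄) (h21 : α₂₁ < α₁) :
    α₂₁ * n₁ α₂ α₃ α₄ + n₄ α₁ α₂ α₃ α₂₁ = α₂ * n₂ α₁ α₃ α₄ α₂₁ := by
  unfold n₁ n₂ n₄
  zify [h2, h3, h4, h21.le, Nat.sub_pos_of_lt h21]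
  ring

theorem alpha₁_mul_n₁ (h2 : 1 ≤ α₂) (h3 : 1 ≤ α₃) (h4 : 1 ≤ α₄) (h21 : α₂₁ < α₁) :
    α₁ * n₁ α₂ α₃ α₄ = n₃ α₁ α₂ α₄ α₂₁ + (α₄ - 1) * n₄ α₁ α₂ α₃ α₂₁ := by
  have hα₄ : α₄ ≤ α₁ * α₄ + (α₁ - α₂₁ - 1) * (α₂ - 1) * (α₄ - 1) + 1 :=
    le_add_right (le_add_right (Nat.le_mul_of_pos_left α₄ (by omega)))
  unfold n₁ n₃ n₄
  zify [h2, h3, h4, h21.le, Nat.sub_pos_of_lt h21, hα₄]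
  ring

theorem f1j_relation (h2 : 1 ≤ α₂) (h3 : 1 ≤ α₃) (h4 : 1 ≤ α₄) (h21 : α₂₁ < α₁)
    {j : ℕ} (hj : j ≤ α₄ - 1) :
    (α₁ + j * α₂₁) * n₁ α₂ α₃ α₄ =
      j * α₂ * n₂ α₁ α₃ α₄ α₂₁ + n₃ α₁ α₂ α₄ α₂₁ + (α₄ - 1 - j) * n₄ α₁ α₂ α₃ α₂₁ := by
  have hA := alpha₁_mul_n₁ h2 h3 h4 h21
  have hB := congrArg (j * ·) (alpha₂₁_mul_n₁_add_n₄ h2 h3 h4 h21)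
  obtain ⟨k, hk⟩ : ∃ k, α₄ - 1 = k + j := ⟨α₄ - 1 - j, by omega⟩
  rw [hk] at hA
  rw [hk, Nat.add_sub_cancel]
  linarith

end Komeda

theorem f1j_in_ideal_general (α₁ α₂ α₃ α₄ α₂₁ : ℕ)
    (h1 : 2 ≤ α₁) (h2 : 2 ≤ α₂) (h3 : 2 ≤ α₃) (h4 : 2 ≤ α₄)
    (h21' : α₂₁ ≤ α₁ - 2) :
    ∀ j : ℕ, j ≤ α₄ - 1 →
      (α₁ + j * α₂₁) * (α₂ * α₃ * (α₄ - 1) + 1) =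
        j * α₂ * (α₂₁ * α₃ * α₄ + (α₁ - α₂₁ - 1) * (α₃ - 1) + α₃)
        + (α₁ * α₄ + (α₁ - α₂₁ - 1) * (α₂ - 1) * (α₄ - 1) + 1 - α₄)
        + (α₄ - 1 - j) * (α₁ * α₂ * (α₃ - 1) + α₂₁ * (α₂ - 1) + α₂) := fun _ hj =>
  Komeda.f1j_relation (by omega) (by omega) (by omega) (by omega) hj

/-- the binomials `f_{1,j}` lie in the toric ideal, i.e.
`(α₁ + j·α₂₁)·n₁ = j·α₂·n₂ + n₃ + (α₄−1−j)·n₄` for all `0 ≤ j ≤ α₄ − 1`. -/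
theorem f1j_in_ideal (α₁ α₂ α₃ α₄ α₂₁ : ℕ)
    (h1 : 2 ≤ α₁) (h2 : 2 ≤ α₂) (h3 : 2 ≤ α₃) (h4 : 2 ≤ α₄)
    (h21 : 1 ≤ α₂₁) (h21' : α₂₁ ≤ α₁ - 2) :
    ∀ j : ℕ, j ≤ α₄ - 1 →
      (α₁ + j * α₂₁) * (α₂ * α₃ * (α₄ - 1) + 1) =
        j * α₂ * (α₂₁ * α₃ * α₄ + (α₁ - α₂₁ - 1) * (α₃ - 1) + α₃)
        + (α₁ * α₄ + (α₁ - α₂₁ - 1) * (α₂ - 1) * (α₄ - 1) + 1 - α₄)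
        + (α₄ - 1 - j) * (α₁ * α₂ * (α₃ - 1) + α₂₁ * (α₂ - 1) + α₂) :=
  f1j_in_ideal_general α₁ α₂ α₃ α₄ α₂₁ h1 h2 h3 h4 h21'
end

section
/- Let R₁(t) = (∑_{j=0}^{α₃+α₂₁−1} t^j)·(∑_{j=0}^{(α₄−1)α₂−α₄} t^{j+α₄−1}) and R₂(t) = t^{(α₄−2)α₂+2}·(∑_{j=0}^{α₂₁−1} t^j)·(∑_{j=0}^{α₂+α₃−3} t^j). Then R₁(t) − R₂(t) = t^{α₄−1}·(∑_{j=0}^{α₃+α₂₁−1} t^j)·(∑_{j=0}^{(α₄−2)(α₂−1)} t^j) + t^{(α₄−2)α₂+α₂₁+2}·(∑_{j=0}^{α₃−1} t^j)·(∑_{j=0}^{α₂−α₂₁−3} t^j). -/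
/-!
Every factor `∑_{j<n} t^j` becomes `t^n - 1` after multiplication by `t - 1`, so multiplying both
sides by `(t - 1)^2` turns the claim into an identity between sums of monomials in `t`, which is
checked by ring normalisation. Since `(t - 1)^2` is monic, it can be cancelled again.
-/

open Polynomial Finset

theorem sum_range_pow_add {S : Type*} [CommSemiring S] (x : S) (n k : ℕ) :
    ∑ j ∈ range n, x ^ (j + k) = x ^ k * ∑ j ∈ range n, x ^ j := by
  rw [mul_sum]
  simp only [pow_add, mul_comm]

section GeomSum

variable {R : Type*} [CommRing R]

theorem isRegular_X_sub_one_sq : IsRegular (((X : R[X]) - 1) ^ 2) := by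
  simpa using ((monic_X_sub_C (1 : R)).pow 2).isRegular

theorem X_sub_one_sq_mul_X_pow_mul_geom_sum_mul_geom_sum (k a b : ℕ) :
    ((X : R[X]) - 1) ^ 2 * (X ^ k * (∑ j ∈ range a, X ^ j) * ∑ j ∈ range b, X ^ j)
      = X ^ k * (X ^ a - 1) * (X ^ b - 1) := by
  rw [← mul_geom_sum, ← mul_geom_sum]
  ring

-- The remark with `α₄ = a + 2`, `α₂ = m + c + 2`, `α₃ = e`, `α₂₁ = m`.
theorem R₁_sub_R₂_eq (a c e m : ℕ) :
    X ^ (a + 1) * (∑ j ∈ range (e + m), (X : R[X]) ^ j) *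
        ∑ j ∈ range ((a + 1) * (m + c + 1)), X ^ j
      - X ^ (a * (m + c + 2) + 2) * (∑ j ∈ range m, (X : R[X]) ^ j) *
        ∑ j ∈ range (m + c + e), X ^ j
    = X ^ (a + 1) * (∑ j ∈ range (e + m), (X : R[X]) ^ j) *
        ∑ j ∈ range (a * (m + c + 1) + 1), X ^ j
      + X ^ (a * (m + c + 2) + m + 2) * (∑ j ∈ range e, (X : R[X]) ^ j) *
        ∑ j ∈ range c, X ^ j := by
  apply isRegular_X_sub_one_sq.left
  simp only [mul_sub, mul_add, X_sub_one_sq_mul_X_pow_mul_geom_sum_mul_geom_sum]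
  ring

end GeomSum

/-- Sums `∑_{j=0}^{N} t^j` are rendered as sums over `Finset.range (N+1)`, with
the count written so that it is `0` exactly when `N < 0` (empty sum). -/
theorem remark_R1_R2_general (α₂ α₃ α₄ α₂₁ : ℕ)
    (h2 : α₂₁ + 2 ≤ α₂) (h4 : 2 ≤ α₄) :
    (∑ j ∈ range (α₃ + α₂₁), (X : Polynomial ℤ) ^ j) *
        (∑ j ∈ range ((α₄ - 1) * α₂ + 1 - α₄),
          (X : Polynomial ℤ) ^ (j + (α₄ - 1)))
      - (X : Polynomial ℤ) ^ ((α₄ - 2) * α₂ + 2) *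
          (∑ j ∈ range α₂₁, (X : Polynomial ℤ) ^ j) *
          (∑ j ∈ range (α₂ + α₃ - 2), (X : Polynomial ℤ) ^ j)
    = (X : Polynomial ℤ) ^ (α₄ - 1) *
          (∑ j ∈ range (α₃ + α₂₁), (X : Polynomial ℤ) ^ j) *
          (∑ j ∈ range ((α₄ - 2) * (α₂ - 1) + 1), (X : Polynomial ℤ) ^ j)
      + (X : Polynomial ℤ) ^ ((α₄ - 2) * α₂ + α₂₁ + 2) *
          (∑ j ∈ range α₃, (X : Polynomial ℤ) ^ j) *
          (∑ j ∈ range (α₂ - α₂₁ - 2), (X : Polynomial ℤ) ^ j) := by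
  obtain ⟨a, rfl⟩ : ∃ a, α₄ = a + 2 := ⟨α₄ - 2, by omega⟩
  obtain ⟨c, rfl⟩ : ∃ c, α₂ = α₂₁ + c + 2 := ⟨α₂ - α₂₁ - 2, by omega⟩
  simp only [Nat.reduceSubDiff]
  have hlen : (a + 1) * (α₂₁ + c + 2) - (a + 1) = (a + 1) * (α₂₁ + c + 1) :=
    Nat.sub_eq_of_eq_add (by ring)
  rw [hlen, sum_range_pow_add, mul_left_comm, ← mul_assoc]
  convert R₁_sub_R₂_eq a c α₃ α₂₁ using 5 <;> omega

/-- the identity `R₁(t) − R₂(t) = …` of polynomials in `ℤ[t]`.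
Sums `∑_{j=0}^{N} t^j` are rendered as sums over `Finset.range (N+1)`, with
the count written so that it is `0` exactly when `N < 0` (empty sum). -/
theorem remark_R1_R2 (α₁ α₂ α₃ α₄ α₂₁ : ℕ)
    (h21 : 1 ≤ α₂₁) (h2 : α₂₁ + 2 ≤ α₂) (h3 : 2 ≤ α₃) (h4 : 2 ≤ α₄) :
    (∑ j ∈ range (α₃ + α₂₁), (X : Polynomial ℤ) ^ j) *
        (∑ j ∈ range ((α₄ - 1) * α₂ + 1 - α₄),
          (X : Polynomial ℤ) ^ (j + (α₄ - 1)))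
      - (X : Polynomial ℤ) ^ ((α₄ - 2) * α₂ + 2) *
          (∑ j ∈ range α₂₁, (X : Polynomial ℤ) ^ j) *
          (∑ j ∈ range (α₂ + α₃ - 2), (X : Polynomial ℤ) ^ j)
    = (X : Polynomial ℤ) ^ (α₄ - 1) *
          (∑ j ∈ range (α₃ + α₂₁), (X : Polynomial ℤ) ^ j) *
          (∑ j ∈ range ((α₄ - 2) * (α₂ - 1) + 1), (X : Polynomial ℤ) ^ j)
      + (X : Polynomial ℤ) ^ ((α₄ - 2) * α₂ + α₂₁ + 2) *
          (∑ j ∈ range α₃, (X : Polynomial ℤ) ^ j) *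
          (∑ j ∈ range (α₂ - α₂₁ - 2), (X : Polynomial ℤ) ^ j) :=
  remark_R1_R2_general α₂ α₃ α₄ α₂₁ h2 h4
end

section
/- Let S₁(t) = t^{α₄−1}·(∑_{j=0}^{α₃+α₂₁−1} t^j)·(∑_{j=0}^{(α₄−2)(α₂−1)} t^j) and S₂(t) = (∑_{j=0}^{α₂₁−1} t^j)·(∑_{j=0}^{α₃−2} t^j)·(∑_{j=1}^{α₄−2} t^{jα₂+α₄−j}). Then S₁(t) − S₂(t) = t^{α₄−1}·(∑_{j=0}^{α₃+α₂₁−1} t^j)·(∑_{j=0}^{α₂−1} t^j) + t^{α₄+α₂+α₃−2}·(∑_{j=0}^{α₂₁} t^j)·(∑_{j=0}^{(α₄−3)(α₂−1)−1} t^j) + t^{α₄+α₂−1+α₂₁}·(∑_{j=0}^{α₂−α₂₁−2} t^j)·(∑_{j=0}^{α₃−2} t^j)·(∑_{j=0}^{α₄−3} t^{j(α₂−1)}) − t^{(α₄−2)α₂+2}·(∑_{j=0}^{α₃−2} t^j)·(∑_{j=0}^{α₂−2} t^j). -/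
/-!
Over a field, with `x ≠ 1` and `x ^ (α₂ - 1) ≠ 1`, every sum in the identity is geometric: the sums
`∑ t^j` equal `(t^n - 1)/(t - 1)`, and after reindexing `j ↦ j + 1` the sum over `Icc 1 (α₄ - 2)`
is a geometric sum in `t^(α₂ - 1)`. Clearing the two denominators leaves a polynomial identity
in `x` once the exponents are written without truncated subtraction. In `ℤ[X]` it is then read
off through the fraction field, where `X ≠ 1` and `X ^ (α₂ - 1) ≠ 1`.
-/

open Polynomial Finset

theorem Polynomial.X_pow_ne_one {R : Type*} [Semiring R] [Nontrivial R] {k : ℕ} (hk : k ≠ 0) :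
    (X : R[X]) ^ k ≠ 1 :=
  fun h => hk (by simpa using congrArg natDegree h)

theorem Finset.sum_Icc_pow_mul_add_sub {R : Type*} [Semiring R] (x : R) {n N α : ℕ}
    (hn : n ≤ N) (hα : 1 ≤ α) :
    ∑ j ∈ Icc 1 n, x ^ (j * α + (N - j)) = x ^ (α + N - 1) * ∑ i ∈ range n, x ^ (i * (α - 1)) := by
  rw [mul_sum, ← Ico_add_one_right_eq_Icc, sum_Ico_eq_sum_range]
  refine sum_congr rfl fun i hi => ?_
  have hi : 1 + i ≤ N := by grind
  rw [← pow_add]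
  congr 1
  zify [hi, hα, (by omega : 1 ≤ α + N)]
  ring

theorem S1_sub_S2_eq_of_ne_one {K : Type*} [Field K] {x : K} {α₂ α₃ α₄ α₂₁ : ℕ}
    (h21 : 1 ≤ α₂₁) (h2 : α₂₁ + 2 ≤ α₂) (h3 : 2 ≤ α₃) (h4 : 3 ≤ α₄)
    (hx : x ≠ 1) (hx' : x ^ (α₂ - 1) ≠ 1) :
    x ^ (α₄ - 1) * (∑ j ∈ range (α₃ + α₂₁), x ^ j) *
        (∑ j ∈ range ((α₄ - 2) * (α₂ - 1) + 1), x ^ j)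
      - (∑ j ∈ range α₂₁, x ^ j) * (∑ j ∈ range (α₃ - 1), x ^ j) *
          (∑ j ∈ Icc 1 (α₄ - 2), x ^ (j * α₂ + (α₄ - j)))
    = x ^ (α₄ - 1) * (∑ j ∈ range (α₃ + α₂₁), x ^ j) * (∑ j ∈ range α₂, x ^ j)
      + x ^ (α₄ + α₂ + α₃ - 2) * (∑ j ∈ range (α₂₁ + 1), x ^ j) *
          (∑ j ∈ range ((α₄ - 3) * (α₂ - 1)), x ^ j)
      + x ^ (α₄ + α₂ - 1 + α₂₁) * (∑ j ∈ range (α₂ - α₂₁ - 1), x ^ j) *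
          (∑ j ∈ range (α₃ - 1), x ^ j) * (∑ j ∈ range (α₄ - 2), x ^ (j * (α₂ - 1)))
      - x ^ ((α₄ - 2) * α₂ + 2) * (∑ j ∈ range (α₃ - 1), x ^ j) *
          (∑ j ∈ range (α₂ - 1), x ^ j) := by
  rw [sum_Icc_pow_mul_add_sub x (by omega : α₄ - 2 ≤ α₄) (by omega : 1 ≤ α₂)]
  simp only [pow_mul', geom_sum_eq hx, geom_sum_eq hx']
  have hx₁ : x - 1 ≠ 0 := sub_ne_zero.mpr hx
  have hx₂ : x ^ (α₂ - 1) - 1 ≠ 0 := sub_ne_zero.mpr hx'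
  field_simp
  obtain ⟨a, rfl⟩ : ∃ a, α₂₁ = a + 1 := ⟨α₂₁ - 1, by omega⟩
  obtain ⟨b, rfl⟩ : ∃ b, α₂ = a + b + 3 := ⟨α₂ - a - 3, by omega⟩
  obtain ⟨c, rfl⟩ : ∃ c, α₃ = c + 2 := ⟨α₃ - 2, by omega⟩
  obtain ⟨d, rfl⟩ : ∃ d, α₄ = d + 3 := ⟨α₄ - 3, by omega⟩
  rw [show d + 3 - 2 = d + 1 by omega, show a + b + 3 + (d + 3) - 1 = a + b + d + 5 by omega,
    show d + 3 + (a + b + 3) + (c + 2) - 2 = a + b + c + d + 6 by omega,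
    show a + b + 3 - (a + 1) - 1 = b + 1 by omega]
  norm_num
  ring

theorem remark_S1_S2_general (α₂ α₃ α₄ α₂₁ : ℕ)
    (h21 : 1 ≤ α₂₁) (h2 : α₂₁ + 2 ≤ α₂) (h3 : 2 ≤ α₃) (h4 : 3 ≤ α₄) :
    (X : Polynomial ℤ) ^ (α₄ - 1) *
        (∑ j ∈ range (α₃ + α₂₁), (X : Polynomial ℤ) ^ j) *
        (∑ j ∈ range ((α₄ - 2) * (α₂ - 1) + 1), (X : Polynomial ℤ) ^ j)
      - (∑ j ∈ range α₂₁, (X : Polynomial ℤ) ^ j) *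
          (∑ j ∈ range (α₃ - 1), (X : Polynomial ℤ) ^ j) *
          (∑ j ∈ Icc 1 (α₄ - 2), (X : Polynomial ℤ) ^ (j * α₂ + (α₄ - j)))
    = (X : Polynomial ℤ) ^ (α₄ - 1) *
          (∑ j ∈ range (α₃ + α₂₁), (X : Polynomial ℤ) ^ j) *
          (∑ j ∈ range α₂, (X : Polynomial ℤ) ^ j)
      + (X : Polynomial ℤ) ^ (α₄ + α₂ + α₃ - 2) *
          (∑ j ∈ range (α₂₁ + 1), (X : Polynomial ℤ) ^ j) *
          (∑ j ∈ range ((α₄ - 3) * (α₂ - 1)), (X : Polynomial ℤ) ^ j)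
      + (X : Polynomial ℤ) ^ (α₄ + α₂ - 1 + α₂₁) *
          (∑ j ∈ range (α₂ - α₂₁ - 1), (X : Polynomial ℤ) ^ j) *
          (∑ j ∈ range (α₃ - 1), (X : Polynomial ℤ) ^ j) *
          (∑ j ∈ range (α₄ - 2), (X : Polynomial ℤ) ^ (j * (α₂ - 1)))
      - (X : Polynomial ℤ) ^ ((α₄ - 2) * α₂ + 2) *
          (∑ j ∈ range (α₃ - 1), (X : Polynomial ℤ) ^ j) *
          (∑ j ∈ range (α₂ - 1), (X : Polynomial ℤ) ^ j) := by
  set ι := algebraMap ℤ[X] (FractionRing ℤ[X])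
  have hι : Function.Injective ι := IsFractionRing.injective _ _
  have hX (k : ℕ) (hk : k ≠ 0) : ι X ^ k ≠ 1 := by
    rw [← map_pow, map_ne_one_iff ι hι]
    exact X_pow_ne_one hk
  apply hι
  simp only [map_sub, map_add, map_mul, map_sum, map_pow]
  exact S1_sub_S2_eq_of_ne_one h21 h2 h3 h4 (by simpa using hX 1 one_ne_zero) (hX _ (by omega))

/-- the identity `S₁(t) − S₂(t) = …` of polynomials in `ℤ[t]`.
Sums `∑_{j=0}^{N} t^j` are rendered as sums over `Finset.range (N+1)`, with
the count written so that it is `0` exactly when `N < 0` (empty sum). -/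
theorem remark_S1_S2 (α₁ α₂ α₃ α₄ α₂₁ : ℕ)
    (h21 : 1 ≤ α₂₁) (h2 : α₂₁ + 2 ≤ α₂) (h3 : 2 ≤ α₃) (h4 : 3 ≤ α₄) :
    (X : Polynomial ℤ) ^ (α₄ - 1) *
        (∑ j ∈ range (α₃ + α₂₁), (X : Polynomial ℤ) ^ j) *
        (∑ j ∈ range ((α₄ - 2) * (α₂ - 1) + 1), (X : Polynomial ℤ) ^ j)
      - (∑ j ∈ range α₂₁, (X : Polynomial ℤ) ^ j) *
          (∑ j ∈ range (α₃ - 1), (X : Polynomial ℤ) ^ j) *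
          (∑ j ∈ Icc 1 (α₄ - 2), (X : Polynomial ℤ) ^ (j * α₂ + (α₄ - j)))
    = (X : Polynomial ℤ) ^ (α₄ - 1) *
          (∑ j ∈ range (α₃ + α₂₁), (X : Polynomial ℤ) ^ j) *
          (∑ j ∈ range α₂, (X : Polynomial ℤ) ^ j)
      + (X : Polynomial ℤ) ^ (α₄ + α₂ + α₃ - 2) *
          (∑ j ∈ range (α₂₁ + 1), (X : Polynomial ℤ) ^ j) *
          (∑ j ∈ range ((α₄ - 3) * (α₂ - 1)), (X : Polynomial ℤ) ^ j)
      + (X : Polynomial ℤ) ^ (α₄ + α₂ - 1 + α₂₁) *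
          (∑ j ∈ range (α₂ - α₂₁ - 1), (X : Polynomial ℤ) ^ j) *
          (∑ j ∈ range (α₃ - 1), (X : Polynomial ℤ) ^ j) *
          (∑ j ∈ range (α₄ - 2), (X : Polynomial ℤ) ^ (j * (α₂ - 1)))
      - (X : Polynomial ℤ) ^ ((α₄ - 2) * α₂ + 2) *
          (∑ j ∈ range (α₃ - 1), (X : Polynomial ℤ) ^ j) *
          (∑ j ∈ range (α₂ - 1), (X : Polynomial ℤ) ^ j) :=
  remark_S1_S2_general α₂ α₃ α₄ α₂₁ h21 h2 h3 h4
end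

section
/- Let Z(t) = (∑_{m=0}^{(α₄−1)α₂−1} t^m)·(∑_{i=1}^{α₄−1} ∑_{j=s_{i−1}}^{s_i−1} t^{jα₁+((α₄−1)j+(i+1))α₂₁+α₃−j}). If (α₄−1)α₂ < α₁ + (α₄−1)α₂₁, then every coefficient of Z(t) is at most 1. (The reason is that the exponents jα₁+((α₄−1)j+(i+1))α₂₁+α₃−j of consecutive terms in the double sum differ by α₁+(α₄−1)α₂₁−1 for fixed i, and by α₁+α₄α₂₁−1 when i increases, and both of these exceed (α₄−1)α₂ − 1.) -/
/-!
Multiplying `X ^ E` by `1 + X + ⋯ + X ^ (L - 1)` spreads it over the window `[E, E + L)`, so the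
coefficients of the product are at most `1` as soon as the exponents `E` of the double sum are
pairwise at least `L` apart. Because `s` is monotone, the blocks `[s (i - 1), s i)` are laid out
in increasing order of `i`, so `j` determines `i` and a larger `j` comes with a larger `i`; the
exponent is affine with slopes `α₁ + (α₄ - 1) α₂₁ - 1 ≥ L` in `j` and `α₂₁ ≥ 0` in `i`.
-/

open Polynomial Finset

section Window

variable {R : Type*} [Semiring R]

theorem coeff_geomSum_mul_X_pow (L E n : ℕ) :
    ((∑ m ∈ range L, (X : R[X]) ^ m) * X ^ E).coeff n =
      if E ≤ n ∧ n < E + L then 1 else 0 := by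
  simp only [coeff_mul_X_pow', finsetSum_coeff, coeff_X_pow, sum_ite_eq, mem_range]
  split_ifs <;> first | rfl | omega

theorem coeff_geomSum_mul_sum_X_pow_le_one [PartialOrder R] [IsOrderedRing R]
    {ι : Type*} (S : Finset ι) (e : ι → ℕ) (L : ℕ)
    (hsep : ∀ p ∈ S, ∀ q ∈ S, p ≠ q → e p + L ≤ e q ∨ e q + L ≤ e p) (n : ℕ) :
    ((∑ m ∈ range L, (X : R[X]) ^ m) * ∑ p ∈ S, X ^ e p).coeff n ≤ 1 := by
  simp only [mul_sum, finsetSum_coeff, coeff_geomSum_mul_X_pow, sum_boole]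
  refine (Nat.mono_cast (card_le_one.mpr fun p hp q hq => ?_)).trans_eq Nat.cast_one
  simp only [mem_filter] at hp hq
  by_contra hpq
  rcases hsep p hp.1 q hq.1 hpq with h | h <;> omega

end Window

theorem le_of_mem_Ico_of_le {s : ℕ → ℕ} {N : ℕ} (hs : ∀ i, i + 1 ≤ N → s i ≤ s (i + 1))
    {i i' j j' : ℕ} (hi : i ≤ N) (hj : j ∈ Ico (s (i - 1)) (s i))
    (hj' : j' ∈ Ico (s (i' - 1)) (s i')) (hjj' : j ≤ j') : i ≤ i' := by
  by_contra! hi'i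
  have hmono : MonotoneOn s (Set.Iic N) :=
    monotoneOn_of_le_add_one Set.ordConnected_Iic fun a _ _ ha1 => hs a ha1
  have : s i' ≤ s (i - 1) :=
    hmono (by rw [Set.mem_Iic]; omega) (by rw [Set.mem_Iic]; omega) (by omega)
  rw [mem_Ico] at hj hj'
  omega

theorem exponent_add_le {a b c k L i i' j j' : ℕ} (hL : L < a + k * b) (hi : i ≤ i')
    (hj : j < j') :
    j * a + (k * j + (i + 1)) * b + c - j + L ≤ j' * a + (k * j' + (i' + 1)) * b + c - j' := by
  -- `a + k * b ≥ 1`, so the truncated `- j` never bites and the exponent is affine in `(i, j)`.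
  obtain ⟨D, hD⟩ : ∃ D, a + k * b = D + 1 := ⟨a + k * b - 1, by omega⟩
  have untruncate : ∀ x y, x * a + (k * x + y) * b + c - x = x * D + y * b + c := by
    intro x y
    have : x * a + (k * x + y) * b = x * D + x + y * b := by
      rw [← mul_add_one, ← hD]; ring
    omega
  rw [untruncate, untruncate]
  have hjD := Nat.mul_le_mul_right D (show j + 1 ≤ j' from hj)
  have hib := Nat.mul_le_mul_right b (show i + 1 ≤ i' + 1 by omega)
  rw [add_one_mul] at hjD
  omega

theorem Z_coeff_le_one_general (α₁ α₂ α₃ α₄ α₂₁ : ℕ)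
    (s : ℕ → ℕ) (hs : ∀ i : ℕ, i + 1 ≤ α₄ - 1 → s i ≤ s (i + 1))
    (hlt : (α₄ - 1) * α₂ < α₁ + (α₄ - 1) * α₂₁) :
    ∀ n : ℕ,
      ((∑ m ∈ range ((α₄ - 1) * α₂), (X : Polynomial ℤ) ^ m) *
        (∑ i ∈ Icc 1 (α₄ - 1), ∑ j ∈ Ico (s (i - 1)) (s i),
          (X : Polynomial ℤ) ^
            (j * α₁ + ((α₄ - 1) * j + (i + 1)) * α₂₁ + α₃ - j))).coeff n ≤ 1 := by
  rw [sum_sigma']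
  refine coeff_geomSum_mul_sum_X_pow_le_one _ _ _ fun p hp q hq hpq => ?_
  rw [mem_sigma, mem_Icc] at hp hq
  have block_le : p.2 ≤ q.2 → p.1 ≤ q.1 := le_of_mem_Ico_of_le hs hp.1.2 hp.2 hq.2
  have block_ge : q.2 ≤ p.2 → q.1 ≤ p.1 := le_of_mem_Ico_of_le hs hq.1.2 hq.2 hp.2
  rcases lt_trichotomy p.2 q.2 with h | h | h
  · exact .inl (exponent_add_le hlt (block_le h.le) h)
  · exact absurd (Sigma.ext ((block_le h.le).antisymm (block_ge h.ge)) (heq_of_eq h)) hpq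
  · exact .inr (exponent_add_le hlt (block_ge h.le) h)

/-- if `(α₄−1)α₂ < α₁ + (α₄−1)α₂₁`, then every coefficient of
`Z(t) = (∑_{m=0}^{(α₄−1)α₂−1} t^m)·(∑_{i=1}^{α₄−1} ∑_{j=s_{i−1}}^{s_i−1}
t^{jα₁+((α₄−1)j+(i+1))α₂₁+α₃−j})` is at most `1`. -/
theorem Z_coeff_le_one (α₁ α₂ α₃ α₄ α₂₁ : ℕ)
    (h1 : 2 ≤ α₁) (h2 : 2 ≤ α₂) (h3 : 2 ≤ α₃) (h4 : 2 ≤ α₄) (h21 : 1 ≤ α₂₁)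
    (s : ℕ → ℕ) (hs : ∀ i : ℕ, i + 1 ≤ α₄ - 1 → s i ≤ s (i + 1))
    (hlt : (α₄ - 1) * α₂ < α₁ + (α₄ - 1) * α₂₁) :
    ∀ n : ℕ,
      ((∑ m ∈ range ((α₄ - 1) * α₂), (X : Polynomial ℤ) ^ m) *
        (∑ i ∈ Icc 1 (α₄ - 1), ∑ j ∈ Ico (s (i - 1)) (s i),
          (X : Polynomial ℤ) ^
            (j * α₁ + ((α₄ - 1) * j + (i + 1)) * α₂₁ + α₃ - j))).coeff n ≤ 1 :=
  Z_coeff_le_one_general α₁ α₂ α₃ α₄ α₂₁ s hs hlt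
end

section
/- Let Y(t) = (∑_{m=0}^{α₂₁−1} t^m)·(∑_{j=0}^{α₄−2} t^{((α₄−1)s_j+j)α₂+α₄−j}). If α₂ > α₂₁ + 1 and s₀ ≤ s₁ ≤ … ≤ s_{α₄−2}, then every coefficient of Y(t) is at most 1. (The reason is that the exponents ((α₄−1)s_j+j)α₂+α₄−j of consecutive terms differ by at least α₂ − 1 > α₂₁ − 1.) -/
open Polynomial Finset

/-!
Multiplying by `1 + t + ⋯ + t^(α₂₁-1)` spreads each monomial `t^(e j)` over the window of
exponents `[e j, e j + α₂₁)`. Consecutive exponents `e j` differ by at least `α₂ - 1 ≥ α₂₁`, so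
these windows are pairwise disjoint, and every exponent is hit at most once.
-/

theorem coeff_sum_X_pow_le_one {R ι : Type*} [Semiring R] [PartialOrder R] [IsOrderedRing R]
    {S : Finset ι} {g : ι → ℕ} (hg : Set.InjOn g S) (n : ℕ) :
    (∑ i ∈ S, (X : R[X]) ^ g i).coeff n ≤ 1 := by
  have hcard : #{i ∈ S | n = g i} ≤ 1 :=
    card_le_one.2 fun a ha b hb ↦ hg (mem_filter.1 ha).1 (mem_filter.1 hb).1
      ((mem_filter.1 ha).2.symm.trans (mem_filter.1 hb).2)
  simp only [finsetSum_coeff, coeff_X_pow, sum_boole]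
  exact (Nat.mono_cast hcard).trans_eq Nat.cast_one

theorem sum_range_X_pow_mul_sum_X_pow {R ι : Type*} [Semiring R] (d : ℕ) (t : Finset ι)
    (e : ι → ℕ) :
    (∑ m ∈ range d, (X : R[X]) ^ m) * ∑ j ∈ t, X ^ e j =
      ∑ p ∈ range d ×ˢ t, X ^ (p.1 + e p.2) := by
  simp only [sum_mul_sum, ← pow_add, sum_product]

theorem injOn_add_of_add_le {ι : Type*} [LinearOrder ι] {d : ℕ} {t : Finset ι} {e : ι → ℕ}
    (hgap : ∀ j ∈ t, ∀ k ∈ t, j < k → e j + d ≤ e k) :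
    Set.InjOn (fun p : ℕ × ι ↦ p.1 + e p.2) (range d ×ˢ t : Finset (ℕ × ι)) := by
  rintro ⟨m, j⟩ hmj ⟨m', k⟩ hmk (heq : m + e j = m' + e k)
  simp only [coe_product, Set.mem_prod, mem_coe, mem_range] at hmj hmk
  obtain hjk | rfl | hkj := lt_trichotomy j k
  · have := hgap j hmj.2 k hmk.2 hjk
    omega
  · exact Prod.ext (by omega) rfl
  · have := hgap k hmk.2 j hmj.2 hkj
    omega

theorem add_le_of_forall_add_le_succ {e : ℕ → ℕ} {d N : ℕ}
    (h : ∀ j, j + 1 < N → e j + d ≤ e (j + 1)) {j k : ℕ} (hjk : j < k) (hk : k < N) :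
    e j + d ≤ e k := by
  induction k, hjk using Nat.le_induction with
  | base => exact h j hk
  | succ k hjk ih =>
    have := h k hk
    have := ih (by omega)
    omega

theorem coeff_sum_range_X_pow_mul_sum_range_X_pow_le_one {R : Type*} [Semiring R]
    [PartialOrder R] [IsOrderedRing R] {d N : ℕ} {e : ℕ → ℕ}
    (hstep : ∀ j, j + 1 < N → e j + d ≤ e (j + 1)) (n : ℕ) :
    ((∑ m ∈ range d, (X : R[X]) ^ m) * ∑ j ∈ range N, X ^ e j).coeff n ≤ 1 := by
  rw [sum_range_X_pow_mul_sum_X_pow]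
  exact coeff_sum_X_pow_le_one (injOn_add_of_add_le fun j _ k hk hjk ↦
    add_le_of_forall_add_le_succ hstep hjk (mem_range.1 hk)) n

theorem exponent_add_le_succ_add_one {a b : ℕ} {s : ℕ → ℕ} {j : ℕ} (hs : s j ≤ s (j + 1))
    (hj : j + 1 < a) :
    ((a - 1) * s j + j) * b + (a - j) + b ≤
      ((a - 1) * s (j + 1) + (j + 1)) * b + (a - (j + 1)) + 1 := by
  have hmul : ((a - 1) * s j + j) * b + b ≤ ((a - 1) * s (j + 1) + (j + 1)) * b := by
    rw [← Nat.succ_mul]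
    exact Nat.mul_le_mul_right b (by have := Nat.mul_le_mul_left (a - 1) hs; omega)
  omega

theorem Y_coeff_le_one_general (α₂ α₄ α₂₁ : ℕ)
    (s : ℕ → ℕ)
    (h221 : α₂₁ + 1 < α₂)
    (hs : ∀ j : ℕ, j + 1 ≤ α₄ - 2 → s j ≤ s (j + 1)) :
    ∀ n : ℕ,
      ((∑ m ∈ range α₂₁, (X : Polynomial ℤ) ^ m) *
        (∑ j ∈ range (α₄ - 1),
          (X : Polynomial ℤ) ^ (((α₄ - 1) * s j + j) * α₂ + (α₄ - j)))).coeff n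
        ≤ 1 := by
  refine fun n ↦ coeff_sum_range_X_pow_mul_sum_range_X_pow_le_one (fun j hj ↦ ?_) n
  have := exponent_add_le_succ_add_one (a := α₄) (b := α₂) (hs j (by omega)) (by omega)
  omega

/-- if `α₂ > α₂₁ + 1` and `s₀ ≤ s₁ ≤ … ≤ s_{α₄−2}`, then every
coefficient of `Y(t) = (∑_{m=0}^{α₂₁−1} t^m)·(∑_{j=0}^{α₄−2}
t^{((α₄−1)s_j+j)α₂+α₄−j})` is at most `1`. -/
theorem Y_coeff_le_one (α₁ α₂ α₃ α₄ α₂₁ : ℕ)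
    (h21 : 1 ≤ α₂₁) (h2 : 2 ≤ α₂) (h4 : 2 ≤ α₄)
    (s : ℕ → ℕ)
    (h221 : α₂₁ + 1 < α₂)
    (hs : ∀ j : ℕ, j + 1 ≤ α₄ - 2 → s j ≤ s (j + 1)) :
    ∀ n : ℕ,
      ((∑ m ∈ range α₂₁, (X : Polynomial ℤ) ^ m) *
        (∑ j ∈ range (α₄ - 1),
          (X : Polynomial ℤ) ^ (((α₄ - 1) * s j + j) * α₂ + (α₄ - j)))).coeff n
        ≤ 1 :=
  Y_coeff_le_one_general α₂ α₄ α₂₁ s h221 hs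
end

section
/- Suppose s ≥ 1 is the smallest natural number satisfying ((α₄−1)s+α₄−1)α₂ + 1 < sα₁ + ((α₄−1)s+α₄)α₂₁ + α₃ − s (the defining inequality of s_{α₄−1}). Then (α₄−1)sα₂ + 1 ≥ (s−1)(α₁−1) + ((α₄−1)(s−1)+α₄)α₂₁ + α₃, and consequently (α₄−1)(s+1)α₂ ≥ (s−1)α₁ + ((α₄−1)(s−1)+α₄)α₂₁ + α₃ − (s−1) + (α₄−1)α₂ − 1. (Hence the largest exponent occurring among the positive terms of the second Hilbert series is at least the largest exponent occurring among its negative terms.) -/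
/-- The defining inequality of the parameter `s_{α₄−1}`. -/
def SIneq (α₁ α₂ α₃ α₄ α₂₁ s : ℕ) : Prop :=
  ((α₄ - 1) * s + (α₄ - 1)) * α₂ + 1 <
    s * α₁ + ((α₄ - 1) * s + α₄) * α₂₁ + α₃ - s

/-!
By minimality, `s - 1` violates the defining inequality, and since `α₁ ≥ 1` the violated
inequality, read with `(s - 1) * α₁ - (s - 1) = (s - 1) * (α₁ - 1)`,
is exactly the first bound. Adding `(α₄ - 1) * α₂ - 1` to both sides gives the second.
-/

theorem le_of_not_sIneq {α₁ α₂ α₃ α₄ α₂₁ n : ℕ} (hα₁ : 1 ≤ α₁)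
    (h : ¬ SIneq α₁ α₂ α₃ α₄ α₂₁ n) :
    n * (α₁ - 1) + ((α₄ - 1) * n + α₄) * α₂₁ + α₃ ≤ (α₄ - 1) * (n + 1) * α₂ + 1 := by
  have hcoeff : ((α₄ - 1) * n + (α₄ - 1)) * α₂ = (α₄ - 1) * (n + 1) * α₂ := by ring
  have hα₁n : n * (α₁ - 1) + n = n * α₁ := by
    rw [← Nat.mul_add_one, Nat.sub_add_cancel hα₁]
  rw [SIneq, not_lt, hcoeff] at h
  omega

theorem tsub_add_tsub_le_mul_succ_mul {k a b c p m q : ℕ}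
    (h : k * (a - 1) + b + c ≤ p * m * q + 1) :
    k * a + b + c - k + p * q - 1 ≤ p * (m + 1) * q := by
  have hka : k * a ≤ k * (a - 1) + k := by
    rw [← Nat.mul_add_one]
    exact Nat.mul_le_mul_left k (by omega)
  have hsucc : p * (m + 1) * q = p * m * q + p * q := by ring
  omega

theorem largest_exponent_bound_general (α₁ α₂ α₃ α₄ α₂₁ s : ℕ)
    (h1 : 2 ≤ α₁)
    (hs1 : 1 ≤ s)
    (hleast : IsLeast {m : ℕ | SIneq α₁ α₂ α₃ α₄ α₂₁ m} s) :
    (s - 1) * (α₁ - 1) + ((α₄ - 1) * (s - 1) + α₄) * α₂₁ + α₃ ≤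
      (α₄ - 1) * s * α₂ + 1 ∧
    (s - 1) * α₁ + ((α₄ - 1) * (s - 1) + α₄) * α₂₁ + α₃ - (s - 1)
        + (α₄ - 1) * α₂ - 1 ≤
      (α₄ - 1) * (s + 1) * α₂ := by
  obtain ⟨n, rfl⟩ := Nat.exists_eq_add_of_le' hs1
  have hn : ¬ SIneq α₁ α₂ α₃ α₄ α₂₁ n := fun h => Nat.not_succ_le_self n (hleast.2 h)
  have hfirst := le_of_not_sIneq (by omega) hn
  rw [Nat.add_sub_cancel]
  exact ⟨hfirst, tsub_add_tsub_le_mul_succ_mul hfirst⟩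

/-- if `s ≥ 1` is the smallest natural number satisfying the
defining inequality of `s_{α₄−1}`, then
`(α₄−1)sα₂ + 1 ≥ (s−1)(α₁−1) + ((α₄−1)(s−1)+α₄)α₂₁ + α₃` and consequently
`(α₄−1)(s+1)α₂ ≥ (s−1)α₁ + ((α₄−1)(s−1)+α₄)α₂₁ + α₃ − (s−1) + (α₄−1)α₂ − 1`. -/
theorem largest_exponent_bound (α₁ α₂ α₃ α₄ α₂₁ s : ℕ)
    (h1 : 2 ≤ α₁) (h2 : 2 ≤ α₂) (h3 : 2 ≤ α₃) (h4 : 2 ≤ α₄)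
    (h21 : 1 ≤ α₂₁) (h21' : α₂₁ ≤ α₁ - 2)
    (hs1 : 1 ≤ s)
    (hleast : IsLeast {m : ℕ | SIneq α₁ α₂ α₃ α₄ α₂₁ m} s) :
    (s - 1) * (α₁ - 1) + ((α₄ - 1) * (s - 1) + α₄) * α₂₁ + α₃ ≤
      (α₄ - 1) * s * α₂ + 1 ∧
    (s - 1) * α₁ + ((α₄ - 1) * (s - 1) + α₄) * α₂₁ + α₃ - (s - 1)
        + (α₄ - 1) * α₂ - 1 ≤
      (α₄ - 1) * (s + 1) * α₂ :=
  largest_exponent_bound_general α₁ α₂ α₃ α₄ α₂₁ s h1 hs1 hleast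
end
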